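/- The subset Σ of S⁶ given by Σ = {x ∈ S⁶ : x₁ ≥ 0, x₁² + x₂² + x₃² = 1/2, x₄² + x₅² = 1/2} ∪ {x ∈ S⁶ : x₁ < 0, x₁² + x₄² + x₅² = 1/2, x₂² + x₃² = 1/2} is homeomorphic to the 3-sphere S³. -/

import Mathlib

/- STATEMENT 3: The subset Σ of S⁶ given by
   Σ = {x ∈ S⁶ : x₁ ≥ 0, x₁²+x₂²+x₃² = 1/2, x₄²+x₅² = 1/2}
     ∪ {x ∈ S⁶ : x₁ < 0, x₁²+x₄²+x₅² = 1/2, x₂²+x₃² = 1/2}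
   is homeomorphic to the 3-sphere S³. -/

noncomputable section

abbrev E (n : ℕ) : Type := EuclideanSpace ℝ (Fin n)

/-- The sphere `Σ = σ(S³) ⊂ S⁶` of the paper. -/
def SigmaSet : Set (E 7) :=
  {x | x ∈ Metric.sphere (0 : E 7) 1 ∧ 0 ≤ x 0 ∧
       x 0 ^ 2 + x 1 ^ 2 + x 2 ^ 2 = 1 / 2 ∧ x 3 ^ 2 + x 4 ^ 2 = 1 / 2} ∪
  {x | x ∈ Metric.sphere (0 : E 7) 1 ∧ x 0 < 0 ∧
       x 0 ^ 2 + x 3 ^ 2 + x 4 ^ 2 = 1 / 2 ∧ x 1 ^ 2 + x 2 ^ 2 = 1 / 2}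

/-! Write a point of `Σ` as `(t, a, b, 0, 0)` with `t = x 0`, `a = (x 1, x 2)`, `b = (x 3, x 4)`,
and a point of `S³` as `(u, v)` with `u, v ∈ ℝ²`. In terms of the positive and negative parts of
`t`, `Σ` is cut out by `|a|² = 1/2 - (t⁺)²` and `|b|² = 1/2 - (t⁻)²`, with no case distinction.
With the stretch factor `λ(t) = √(1 + 2 (t⁺)²)`, the map `(t, a, b) ↦ (λ(t) b, λ(-t) a)` lands in
`S³`, and since `t⁺ t⁻ = 0` one gets `|λ(t) b|² - 1/2 = (t⁺)² - (t⁻)²`. So `t` is the signed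
square root of `|u|² - 1/2`, and dividing by the stretch factors recovers `a` and `b`: the inverse
`(u, v) ↦ (t, v / λ(-t), u / λ(t))` is explicit and continuous. -/

lemma posPart_mul_negPart {α : Type*} [Ring α] [LinearOrder α] [IsOrderedRing α] (a : α) :
    a⁺ * a⁻ = 0 := by
  rcases le_total 0 a with ha | ha <;> simp [ha]

lemma EuclideanSpace.mem_sphere_zero_one_iff {ι : Type*} [Fintype ι] (x : EuclideanSpace ℝ ι) :
    x ∈ Metric.sphere (0 : EuclideanSpace ℝ ι) 1 ↔ ∑ i, x i ^ 2 = 1 := by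
  simp [EuclideanSpace.sphere_zero_eq 1 zero_le_one]

namespace Real

def signedSqrt (r : ℝ) : ℝ := √r⁺ - √r⁻

@[fun_prop]
lemma continuous_signedSqrt : Continuous signedSqrt := by
  unfold signedSqrt; fun_prop

lemma signedSqrt_posPart_sq_sub_negPart_sq (t : ℝ) : signedSqrt (t⁺ ^ 2 - t⁻ ^ 2) = t := by
  rcases le_total 0 t with ht | ht <;>
    simp [signedSqrt, ht, sq_nonneg, sqrt_sq_eq_abs, abs_of_nonpos]

lemma posPart_sq_sub_negPart_sq_signedSqrt (r : ℝ) :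
    (signedSqrt r)⁺ ^ 2 - (signedSqrt r)⁻ ^ 2 = r := by
  rcases le_total 0 r with hr | hr <;> simp [signedSqrt, hr]

end Real

namespace SigmaSet

open EuclideanSpace Real

lemma mem_iff (x : E 7) : x ∈ SigmaSet ↔
    x 1 ^ 2 + x 2 ^ 2 = 1 / 2 - (x 0)⁺ ^ 2 ∧ x 3 ^ 2 + x 4 ^ 2 = 1 / 2 - (x 0)⁻ ^ 2 ∧
      x 5 = 0 ∧ x 6 = 0 := by
  simp only [SigmaSet, Set.mem_union, Set.mem_ofPred_eq, mem_sphere_zero_one_iff,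
    Fin.sum_univ_seven]
  constructor
  · rintro (⟨hs, h0, ha, hb⟩ | ⟨hs, h0, hb, ha⟩)
    · rw [posPart_eq_self.2 h0, negPart_eq_zero.2 h0]
      refine ⟨by linarith, by linarith, ?_⟩
      constructor <;> nlinarith [sq_nonneg (x 5), sq_nonneg (x 6)]
    · rw [posPart_eq_zero.2 h0.le, negPart_eq_neg.2 h0.le]
      refine ⟨by linarith, by linarith, ?_⟩
      constructor <;> nlinarith [sq_nonneg (x 5), sq_nonneg (x 6)]
  · rintro ⟨ha, hb, h5, h6⟩
    rcases le_or_gt 0 (x 0) with h0 | h0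
    · simp only [posPart_eq_self.2 h0, negPart_eq_zero.2 h0] at ha hb
      exact Or.inl ⟨by simp only [h5, h6]; linarith, h0, by linarith, by linarith⟩
    · simp only [posPart_eq_zero.2 h0.le, negPart_eq_neg.2 h0.le] at ha hb
      exact Or.inr ⟨by simp only [h5, h6]; linarith, h0, by linarith, by linarith⟩

def stretch (t : ℝ) : ℝ := √(1 + 2 * t⁺ ^ 2)

lemma stretch_pos (t : ℝ) : 0 < stretch t := sqrt_pos.2 (by positivity)

lemma stretch_sq (t : ℝ) : stretch t ^ 2 = 1 + 2 * t⁺ ^ 2 := sq_sqrt (by positivity)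

@[fun_prop]
lemma continuous_stretch : Continuous stretch := by
  unfold stretch; fun_prop

def toSphere (x : E 7) : E 4 :=
  !₂[stretch (x 0) * x 3, stretch (x 0) * x 4, stretch (-x 0) * x 1, stretch (-x 0) * x 2]

def ofSphere (y : E 4) : E 7 :=
  let t := signedSqrt (y 0 ^ 2 + y 1 ^ 2 - 1 / 2)
  !₂[t, y 2 / stretch (-t), y 3 / stretch (-t), y 0 / stretch t, y 1 / stretch t, 0, 0]

@[fun_prop]
lemma continuous_toSphere : Continuous toSphere := by
  unfold toSphere; fun_prop

@[fun_prop]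
lemma continuous_ofSphere : Continuous ofSphere := by
  unfold ofSphere
  fun_prop (disch := exact fun _ => (stretch_pos _).ne')

lemma toSphere_mem_sphere {x : E 7} (hx : x ∈ SigmaSet) :
    toSphere x ∈ Metric.sphere (0 : E 4) 1 := by
  obtain ⟨ha, hb, -, -⟩ := (mem_iff x).1 hx
  rw [mem_sphere_zero_one_iff, Fin.sum_univ_four]
  simp only [toSphere, PiLp.toLp_apply, Matrix.cons_val, mul_pow, stretch_sq]
  linear_combination (1 + 2 * (x 0)⁺ ^ 2) * hb + (1 + 2 * (x 0)⁻ ^ 2) * ha -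
    4 * (x 0)⁺ * (x 0)⁻ * posPart_mul_negPart (x 0)

lemma ofSphere_mem {y : E 4} (hy : y ∈ Metric.sphere (0 : E 4) 1) : ofSphere y ∈ SigmaSet := by
  rw [mem_sphere_zero_one_iff, Fin.sum_univ_four] at hy
  set t := signedSqrt (y 0 ^ 2 + y 1 ^ 2 - 1 / 2) with ht
  have hρ : t⁺ ^ 2 - t⁻ ^ 2 = y 0 ^ 2 + y 1 ^ 2 - 1 / 2 :=
    posPart_sq_sub_negPart_sq_signedSqrt _
  have hpq := posPart_mul_negPart t
  rw [mem_iff]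
  refine ⟨?_, ?_, rfl, rfl⟩ <;>
    simp only [ofSphere, ← ht, PiLp.toLp_apply, Matrix.cons_val, div_pow, ← add_div]
  · rw [div_eq_iff (pow_pos (stretch_pos _) 2).ne', stretch_sq]
    linear_combination hy + hρ + 2 * t⁺ * t⁻ * hpq
  · rw [div_eq_iff (pow_pos (stretch_pos _) 2).ne', stretch_sq]
    linear_combination -hρ + 2 * t⁺ * t⁻ * hpq

lemma toSphere_ofSphere (y : E 4) : toSphere (ofSphere y) = y := by
  ext i
  fin_cases i <;> simp [toSphere, ofSphere, mul_div_cancel₀, (stretch_pos _).ne']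

lemma ofSphere_toSphere {x : E 7} (hx : x ∈ SigmaSet) : ofSphere (toSphere x) = x := by
  obtain ⟨-, hb, h5, h6⟩ := (mem_iff x).1 hx
  have hρ : toSphere x 0 ^ 2 + toSphere x 1 ^ 2 - 1 / 2 = (x 0)⁺ ^ 2 - (x 0)⁻ ^ 2 := by
    simp only [toSphere, PiLp.toLp_apply, Matrix.cons_val, mul_pow, stretch_sq]
    linear_combination (1 + 2 * (x 0)⁺ ^ 2) * hb - 2 * (x 0)⁺ * (x 0)⁻ * posPart_mul_negPart (x 0)
  have ht : signedSqrt (toSphere x 0 ^ 2 + toSphere x 1 ^ 2 - 1 / 2) = x 0 := by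
    rw [hρ, signedSqrt_posPart_sq_sub_negPart_sq]
  simp only [ofSphere, ht]
  ext i
  fin_cases i <;> simp [toSphere, (stretch_pos _).ne', h5, h6]

def homeomorphSphere : SigmaSet ≃ₜ Metric.sphere (0 : E 4) 1 where
  toFun x := ⟨toSphere x, toSphere_mem_sphere x.2⟩
  invFun y := ⟨ofSphere y, ofSphere_mem y.2⟩
  left_inv x := Subtype.ext (ofSphere_toSphere x.2)
  right_inv y := Subtype.ext (toSphere_ofSphere y)
  continuous_toFun := by fun_prop
  continuous_invFun := by fun_prop

end SigmaSet

theorem statement3 :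
    Nonempty (SigmaSet ≃ₜ (Metric.sphere (0 : E 4) 1)) :=
  ⟨SigmaSet.homeomorphSphere⟩
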